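/- arXiv:gr-qc/0605026 — 2 statements merged into one kernel-verified Lean document; each statement's English description precedes it below -/
import Mathlib

section
/- Under the hypotheses above (κ ≠ 0), define ℓ_{(X)} := κ v ℓ₀ where ℓ₀ is the Jezierski–Kijowski field and v is the adjusted compatible coordinate. Then: (a) ℓ₀ commutes with X − ℓ_{(X)}; (b) ℓ_{(X)} commutes with X; (c) the 'surface gravity' of ℓ_{(X)}, defined as ℓ_{(X)}(v')·κ-type constant via D_{ℓ_{(X)}}ℓ_{(X)} = κ_{(X)} ℓ_{(X)}, equals κ; (d) X − ℓ_{(X)} is tangent to every level set {v = const}, hence all its orbits are closed (circles). -/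
/-- Construction of the Hawking vector field, non-extremal case: with `ℓ₀ = ∂_u`
(flow `Vl`), an adjusted compatible coordinate `v` (`ℓ₀(v) = 1`, `v ∘ U_t = e^{κt} v`),
a helical symmetry flow `U` satisfying `[X, ℓ₀] = -κ ℓ₀` (flow relation `hcomm`) and a
base action of period `2π`, the field `ℓ_{(X)} = κ v ℓ₀` (with flow `L`) satisfies:
(a) `ℓ₀` commutes with `X − ℓ_{(X)}` (whose flow is `W_t = U_t ∘ L_{-t}`);
(b) `ℓ_{(X)}` commutes with `X`;
(c) its surface gravity equals `κ` (`v` grows exponentially at rate `κ` along `L`);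
(d) `X − ℓ_{(X)}` is tangent to every level `{v = const}` and all its orbits are
closed (period `2π`). -/
theorem stmt11 {B : Type*} (κ : ℝ) (hκ : κ ≠ 0)
    (Vl : ℝ → B × ℝ → B × ℝ) (hVl : ∀ s p, Vl s p = (p.1, p.2 + s))
    (v : B × ℝ → ℝ) (hv : ∀ s p, v (Vl s p) = v p + s)
    (U : ℝ → B × ℝ → B × ℝ)
    (hUgrp : ∀ t t' p, U t (U t' p) = U (t + t') p)
    (hU0 : ∀ p, U 0 p = p)
    (hcomm : ∀ t s p, U t (Vl s p) = Vl (Real.exp (κ * t) * s) (U t p))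
    (hUv : ∀ t p, v (U t p) = Real.exp (κ * t) * v p)
    (hUper : ∀ p, (U (2 * Real.pi) p).1 = p.1)
    (L : ℝ → B × ℝ → B × ℝ)
    (hL : ∀ s p, L s p = Vl ((Real.exp (κ * s) - 1) * v p) p)
    (W : ℝ → B × ℝ → B × ℝ)
    (hW : ∀ t p, W t p = U t (L (-t) p)) :
    (∀ t s p, W t (Vl s p) = Vl s (W t p)) ∧
    (∀ t s p, U t (L s p) = L s (U t p)) ∧
    (∀ s p, v (L s p) = Real.exp (κ * s) * v p) ∧
    (∀ t p, v (W t p) = v p) ∧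
    (∀ p, W (2 * Real.pi) p = p) := by
  have hUVl : ∀ t s p, U t (Vl s p) = ((U t p).1, (U t p).2 + Real.exp (κ * t) * s) := by
    intro t s p
    rw [hcomm, hVl]
  have hexp : ∀ t : ℝ, Real.exp (κ * t) * Real.exp (κ * -t) = 1 := by
    intro t
    rw [← Real.exp_add, show κ * t + κ * -t = 0 by ring, Real.exp_zero]
  have hvL : ∀ s p, v (L s p) = Real.exp (κ * s) * v p := by
    intro s p
    rw [hL, hv]; ring
  have hvW : ∀ t p, v (W t p) = v p := by
    intro t p
    rw [hW, hUv, hvL, ← mul_assoc, hexp, one_mul]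
  have ha : ∀ t s p, W t (Vl s p) = Vl s (W t p) := by
    intro t s p
    rw [hW, hW, hL (-t) (Vl s p), hL (-t) p, hv]
    rw [hUVl, hUVl, hUVl, hVl]
    have h1 := hexp t
    simp only [Prod.mk.injEq, true_and]
    linear_combination s * h1
  have hb : ∀ t s p, U t (L s p) = L s (U t p) := by
    intro t s p
    rw [hL, hL, hUv, hUVl, hVl]
    simp only [Prod.mk.injEq, true_and]
    ring
  refine ⟨ha, hb, hvL, hvW, ?_⟩
  intro p
  have hfst : (W (2 * Real.pi) p).1 = p.1 := by
    rw [hW, hL, hVl]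
    exact hUper _
  have hkey : ∀ q : B × ℝ, v q = v (q.1, 0) + q.2 := by
    intro q
    have := hv q.2 (q.1, 0)
    rw [hVl] at this
    simpa using this
  have hvw := hvW (2 * Real.pi) p
  rw [hkey (W (2 * Real.pi) p), hkey p, hfst] at hvw
  exact Prod.ext hfst (by linarith)
end

section
/- Let (B, q̂) be a compact orientable Riemannian 2-manifold of genus g, ω̂ a smooth 1-form on B, Φ₁ a smooth complex function on B, and suppose the scalar curvature identity ½R = 2|Φ₁|² + div(ω̂) + |ω̂|²_q̂ holds on B (R = Ricci scalar of q̂). Then, integrating over B and using Gauss–Bonnet, 4π(1−g) = ∫_B (|ω̂|²_q̂ + 2|Φ₁|²) dvol. Consequently g ∈ {0, 1}, and if g = 1 then R ≡ 0, ω̂ ≡ 0 and Φ₁ ≡ 0. -/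
open MeasureTheory

/-!
Integrating `½ R = div ω̂ + (|ω̂|² + 2|Φ₁|²)` kills the divergence term, and Gauss–Bonnet turns the
left side into `4π(1 − g)`. The right side is the integral of a continuous nonnegative function,
so `g ≤ 1`; when `g = 1` that integral vanishes, so (the measure charging every nonempty open set)
the integrand vanishes identically, which forces `ω̂ = 0`, `Φ₁ = 0`, hence `div ω̂ = 0` and `R = 0`.
-/

theorem integral_mul_eq_integral_of_eq_add {α : Type*} [MeasurableSpace α] {μ : Measure α}
    {c : ℝ} {R d f : α → ℝ} (hd : Integrable d μ) (hf : Integrable f μ)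
    (hd0 : ∫ x, d x ∂μ = 0) (hRdf : ∀ x, c * R x = d x + f x) :
    c * ∫ x, R x ∂μ = ∫ x, f x ∂μ := by
  rw [← integral_const_mul, integral_congr_ae (.of_forall hRdf), integral_add hd hf, hd0,
    zero_add]

theorem Continuous.eq_zero_of_integral_eq_zero_of_nonneg {α : Type*} [TopologicalSpace α]
    [MeasurableSpace α] {μ : Measure α} [μ.IsOpenPosMeasure] {f : α → ℝ} (hfc : Continuous f)
    (hfi : Integrable f μ) (hf : 0 ≤ f) (h : ∫ x, f x ∂μ = 0) (x : α) : f x = 0 := by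
  by_contra hx
  exact (integral_pos_of_integrable_nonneg_nonzero hfc hfi hf hx).ne' h

theorem sq_norm_add_two_mul_sq_norm_eq_zero_iff {E F : Type*} [NormedAddCommGroup E]
    [NormedAddCommGroup F] (a : E) (b : F) :
    ‖a‖ ^ 2 + 2 * ‖b‖ ^ 2 = 0 ↔ a = 0 ∧ b = 0 := by
  rw [add_eq_zero_iff_of_nonneg (by positivity) (by positivity)]
  simp

theorem Nat.le_one_of_nonneg_mul_one_sub {c : ℝ} (hc : 0 < c) {g : ℕ}
    (h : 0 ≤ c * (1 - (g : ℝ))) : g ≤ 1 := by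
  have : (g : ℝ) ≤ 1 := by nlinarith
  exact_mod_cast this

theorem stmt13_general {B F : Type*} [TopologicalSpace B] [CompactSpace B]
    [MeasurableSpace B] [BorelSpace B] [NormedAddCommGroup F]
    (μ : Measure B) [IsFiniteMeasure μ] [μ.IsOpenPosMeasure]
    (g : ℕ) (R divω : B → ℝ) (ω : B → F) (Φ₁ : B → ℂ)
    (hωc : Continuous ω) (hΦc : Continuous Φ₁)
    (hdc : Continuous divω)
    (hid : ∀ x, (1/2 : ℝ) * R x = 2 * ‖Φ₁ x‖ ^ 2 + divω x + ‖ω x‖ ^ 2)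
    (hstokes : ∫ x, divω x ∂μ = 0)
    (hlink : (∀ x, ω x = 0) → ∀ x, divω x = 0)
    (hGB : ∫ x, R x ∂μ = 8 * Real.pi * (1 - (g : ℝ))) :
    (4 * Real.pi * (1 - (g : ℝ))
        = ∫ x, (‖ω x‖ ^ 2 + 2 * ‖Φ₁ x‖ ^ 2) ∂μ) ∧
    g ≤ 1 ∧
    (g = 1 → ∀ x, R x = 0 ∧ ω x = 0 ∧ Φ₁ x = 0) := by
  set f : B → ℝ := fun x => ‖ω x‖ ^ 2 + 2 * ‖Φ₁ x‖ ^ 2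
  have hfc : Continuous f := by fun_prop
  have hf_nonneg : 0 ≤ f := fun x => by positivity
  have hfi : Integrable f μ := hfc.integrable_of_hasCompactSupport (.of_compactSpace f)
  have hmass : 4 * Real.pi * (1 - (g : ℝ)) = ∫ x, f x ∂μ := by
    have h := integral_mul_eq_integral_of_eq_add
      (hdc.integrable_of_hasCompactSupport (.of_compactSpace divω)) hfi hstokes
      (fun x => by rw [hid x]; ring)
    rw [hGB] at h
    linarith
  have hg : g ≤ 1 :=
    Nat.le_one_of_nonneg_mul_one_sub (by positivity) (hmass ▸ integral_nonneg hf_nonneg)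
  refine ⟨hmass, hg, fun hg1 => ?_⟩
  have hf0 : ∀ x, f x = 0 :=
    hfc.eq_zero_of_integral_eq_zero_of_nonneg hfi hf_nonneg (by rw [← hmass, hg1]; simp)
  have hωΦ : ∀ x, ω x = 0 ∧ Φ₁ x = 0 :=
    fun x => (sq_norm_add_two_mul_sq_norm_eq_zero_iff _ _).1 (hf0 x)
  have hdiv : ∀ x, divω x = 0 := hlink fun x => (hωΦ x).1
  intro x
  refine ⟨?_, hωΦ x⟩
  have h := hid x
  rw [(hωΦ x).1, (hωΦ x).2, hdiv x] at h
  simpa using h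

/-- Topological constraint (eq:top-cen): on a compact surface `B` of genus `g` with
volume measure `μ`, if the scalar curvature identity
`½ R = 2|Φ₁|² + div ω̂ + |ω̂|²` holds pointwise, the divergence integrates to zero
(Stokes) and Gauss–Bonnet gives `∫ R = 8π(1 − g)`, then
`4π(1 − g) = ∫ (|ω̂|² + 2|Φ₁|²)`, hence `g ≤ 1`, and if `g = 1` then `R ≡ 0`,
`ω̂ ≡ 0` and `Φ₁ ≡ 0`. -/
theorem stmt13 {B F : Type*} [TopologicalSpace B] [CompactSpace B]
    [MeasurableSpace B] [BorelSpace B] [NormedAddCommGroup F]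
    (μ : Measure B) [IsFiniteMeasure μ] [μ.IsOpenPosMeasure]
    (g : ℕ) (R divω : B → ℝ) (ω : B → F) (Φ₁ : B → ℂ)
    (hRc : Continuous R) (hωc : Continuous ω) (hΦc : Continuous Φ₁)
    (hdc : Continuous divω)
    (hid : ∀ x, (1/2 : ℝ) * R x = 2 * ‖Φ₁ x‖ ^ 2 + divω x + ‖ω x‖ ^ 2)
    (hstokes : ∫ x, divω x ∂μ = 0)
    (hlink : (∀ x, ω x = 0) → ∀ x, divω x = 0)
    (hGB : ∫ x, R x ∂μ = 8 * Real.pi * (1 - (g : ℝ))) :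
    (4 * Real.pi * (1 - (g : ℝ))
        = ∫ x, (‖ω x‖ ^ 2 + 2 * ‖Φ₁ x‖ ^ 2) ∂μ) ∧
    g ≤ 1 ∧
    (g = 1 → ∀ x, R x = 0 ∧ ω x = 0 ∧ Φ₁ x = 0) :=
  stmt13_general μ g R divω ω Φ₁ hωc hΦc hdc hid hstokes hlink hGB
end
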